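/- Let X' be separable with countable dense subset {x'_h : h ∈ ℕ} in the closed unit ball, μ : Σ → X a separable countably additive vector measure, (B_k) a μ-dense family, and (η_k), (ω_h) positive reals each summing to 1. For 1 ≤ p < ∞, if f ∈ L¹[μ] satisfies [∑_h ω_h ∑_k η_k |∫_T χ_{B_k} f d|x'_h μ||^p]^{1/p} = 0, then f = 0 μ-almost everywhere; hence ‖·‖_{KS^p[wτμ]} is a norm on L¹[μ]. -/

import Mathlib

/-!
The vanishing of the weighted sum forces `∫_{B_k} f d|x'_h μ| = 0` for all `h, k`. Every
measurable set is approximated by some `B_k` in semivariation, hence in `|x'_h μ|`, so absolute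
continuity of the integral gives `∫_S f d|x'_h μ| = 0` for every measurable `S`, i.e.
`f = 0` `|x'_h μ|`-a.e. A set `A` on which `f ≠ 0` is therefore `|x'_h μ|`-null, and
`x'_h (μ A) = 0` for all `h`. Finally a Hahn–Banach functional norming `μ A` is approximated by
some `x'_h`, so `μ A = 0`.
-/

open MeasureTheory ENNReal

variable {T X : Type*} [MeasurableSpace T] [NormedAddCommGroup X] [NormedSpace ℝ X]

/-- The scalar signed measure `x' ∘ μ` associated with a vector measure `μ`. -/
noncomputable def scalarMeas (μ : VectorMeasure T X) (x' : X →L[ℝ] ℝ) : SignedMeasure T :=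
  μ.mapRange x'.toLinearMap.toAddMonoidHom x'.continuous

/-- The variation measure `|x'μ|`. -/
noncomputable def scalarVar (μ : VectorMeasure T X) (x' : X →L[ℝ] ℝ) : Measure T :=
  (scalarMeas μ x').totalVariation

/-- The integral of a real function with respect to a signed measure. -/
noncomputable def signedIntegral (s : SignedMeasure T) (f : T → ℝ) : ℝ :=
  ∫ t, f t ∂s.toJordanDecomposition.posPart - ∫ t, f t ∂s.toJordanDecomposition.negPart

/-- Kluvánek–Lewis `μ`-integrability. -/
def KLIntegrable (μ : VectorMeasure T X) (f : T → ℝ) : Prop :=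
  (∀ x' : X →L[ℝ] ℝ, Integrable f (scalarVar μ x')) ∧
  ∀ A : Set T, MeasurableSet A → ∃ xA : X, ∀ x' : X →L[ℝ] ℝ,
    x' xA = signedIntegral (scalarMeas μ x') (A.indicator f)

/-- The semivariation `‖μ‖(A) = sup_{‖x'‖ ≤ 1} |x'μ|(A)`. -/
noncomputable def semivar (μ : VectorMeasure T X) (A : Set T) : ℝ≥0∞ :=
  ⨆ x' : {y : X →L[ℝ] ℝ // ‖y‖ ≤ 1}, scalarVar μ x'.1 A

/-- `(B k)` is a `μ`-dense family witnessing the separability of `μ`. -/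
def MuDense (μ : VectorMeasure T X) (B : ℕ → Set T) : Prop :=
  (∀ k, MeasurableSet (B k)) ∧
  ∀ A : Set T, MeasurableSet A → ∀ ε : ℝ, 0 < ε →
    ∃ k, semivar μ (symmDiff A (B k)) ≤ ENNReal.ofReal ε

/-- The Kuelbs–Steadman norm `‖f‖_{KS^p[μ]}` (`1 ≤ p < ∞`). -/
noncomputable def ksNorm (μ : VectorMeasure T X) (B : ℕ → Set T) (η : ℕ → ℝ) (p : ℝ)
    (f : T → ℝ) : ℝ≥0∞ :=
  ⨆ x' : {y : X →L[ℝ] ℝ // ‖y‖ ≤ 1},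
    (∑' k, ENNReal.ofReal (η k * |∫ t, (B k).indicator f t ∂scalarVar μ x'.1| ^ p)) ^ (1 / p)

/-- The Kuelbs–Steadman norm `‖f‖_{KS^∞[μ]}`. -/
noncomputable def ksInfNorm (μ : VectorMeasure T X) (B : ℕ → Set T) (f : T → ℝ) : ℝ≥0∞ :=
  ⨆ x' : {y : X →L[ℝ] ℝ // ‖y‖ ≤ 1},
    ⨆ k : ℕ, ENNReal.ofReal |∫ t, (B k).indicator f t ∂scalarVar μ x'.1|

open scoped symmDiff

section Integral

variable {α ι E : Type*} [MeasurableSpace α] [NormedAddCommGroup E] [NormedSpace ℝ E]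
  {ν : Measure α} {f : α → E}

lemma enorm_setIntegral_sub_setIntegral_le (hf : Integrable f ν) {s t : Set α}
    (hs : MeasurableSet s) (ht : MeasurableSet t) :
    ‖∫ x in s, f x ∂ν - ∫ x in t, f x ∂ν‖ₑ ≤ ∫⁻ x in s ∆ t, ‖f x‖ₑ ∂ν := by
  rw [← integral_indicator hs, ← integral_indicator ht,
    ← integral_sub (hf.indicator hs) (hf.indicator ht), ← lintegral_indicator (hs.symmDiff ht)]
  refine (enorm_integral_le_lintegral_enorm _).trans (le_of_eq (lintegral_congr fun x => ?_))
  rw [← enorm_indicator_eq_indicator_enorm, Set.apply_indicator_symmDiff enorm_neg]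

lemma setIntegral_eq_zero_of_forall_measure_symmDiff_lt (hf : Integrable f ν) {B : ι → Set α}
    (hB : ∀ k, MeasurableSet (B k)) (hBf : ∀ k, ∫ x in B k, f x ∂ν = 0) {s : Set α}
    (hs : MeasurableSet s) (happrox : ∀ δ ≠ 0, ∃ k, ν (s ∆ B k) < δ) :
    ∫ x in s, f x ∂ν = 0 := by
  rw [← enorm_eq_zero]
  refine le_antisymm (le_of_forall_gt fun ε hε => ?_) zero_le
  obtain ⟨δ, hδ, hsmall⟩ := exists_pos_setLIntegral_lt_of_measure_lt hf.2.ne hε.ne'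
  obtain ⟨k, hk⟩ := happrox δ hδ.ne'
  calc ‖∫ x in s, f x ∂ν‖ₑ = ‖∫ x in s, f x ∂ν - ∫ x in B k, f x ∂ν‖ₑ := by
        rw [hBf k, sub_zero]
    _ ≤ ∫⁻ x in s ∆ B k, ‖f x‖ₑ ∂ν := enorm_setIntegral_sub_setIntegral_le hf hs (hB k)
    _ < ε := hsmall _ hk

lemma MeasureTheory.Integrable.ae_eq_zero_of_forall_measure_symmDiff_lt [CompleteSpace E]
    (hf : Integrable f ν) {B : ι → Set α} (hB : ∀ k, MeasurableSet (B k))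
    (hBf : ∀ k, ∫ x in B k, f x ∂ν = 0)
    (happrox : ∀ s, MeasurableSet s → ∀ δ ≠ 0, ∃ k, ν (s ∆ B k) < δ) :
    f =ᵐ[ν] 0 :=
  hf.ae_eq_zero_of_forall_setIntegral_eq_zero fun s hs _ =>
    setIntegral_eq_zero_of_forall_measure_symmDiff_lt hf hB hBf hs (happrox s hs)

end Integral

lemma eq_zero_of_forall_dense_dual_apply_eq_zero {𝕜 E ι : Type*} [RCLike 𝕜]
    [NormedAddCommGroup E] [NormedSpace 𝕜 E] {x' : ι → E →L[𝕜] 𝕜}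
    (hdense : ∀ y : E →L[𝕜] 𝕜, ‖y‖ ≤ 1 → ∀ ε : ℝ, 0 < ε → ∃ i, ‖x' i - y‖ ≤ ε) {v : E}
    (hv : ∀ i, x' i v = 0) : v = 0 := by
  obtain ⟨g, hg, hgv⟩ := exists_dual_vector'' 𝕜 v
  obtain ⟨i, hi⟩ := hdense g hg (1 / 2) (by norm_num)
  have hhalf : ‖v‖ ≤ 1 / 2 * ‖v‖ :=
    calc ‖v‖ = ‖g v‖ := by rw [hgv, RCLike.norm_ofReal, abs_norm]
      _ = ‖(x' i - g) v‖ := by rw [sub_apply, hv, zero_sub, norm_neg]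
      _ ≤ ‖x' i - g‖ * ‖v‖ := (x' i - g).le_opNorm v
      _ ≤ 1 / 2 * ‖v‖ := by gcongr
  exact norm_le_zero_iff.mp (by linarith [norm_nonneg v])

lemma eq_zero_of_weighted_tsum_rpow_eq_zero {ι κ : Type*} {a : ι → κ → ℝ} {ω : ι → ℝ}
    {η : κ → ℝ} (hω : ∀ h, 0 < ω h) (hη : ∀ k, 0 < η k) {p : ℝ} (hp : 0 < p)
    (h0 : (∑' h, ENNReal.ofReal (ω h) * ∑' k, ENNReal.ofReal (η k * |a h k| ^ p)) ^ (1 / p) = 0)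
    (h : ι) (k : κ) : a h k = 0 := by
  rw [ENNReal.rpow_eq_zero_iff_of_pos (by positivity), ENNReal.tsum_eq_zero] at h0
  have hh := h0 h
  rw [mul_eq_zero, ENNReal.ofReal_eq_zero, ENNReal.tsum_eq_zero] at hh
  have hk := ENNReal.ofReal_eq_zero.mp ((hh.resolve_left (hω h).not_ge) k)
  have hpow : |a h k| ^ p ≤ 0 := le_of_mul_le_mul_left (by simpa using hk) (hη k)
  exact abs_eq_zero.mp ((Real.rpow_eq_zero (abs_nonneg _) hp.ne').mp
    (le_antisymm hpow (by positivity)))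

section VectorMeasure

variable {μ : VectorMeasure T X} {x' : X →L[ℝ] ℝ}

lemma scalarVar_le_semivar (hx' : ‖x'‖ ≤ 1) (s : Set T) : scalarVar μ x' s ≤ semivar μ s :=
  le_iSup (fun y : {y : X →L[ℝ] ℝ // ‖y‖ ≤ 1} => scalarVar μ y.1 s) ⟨x', hx'⟩

lemma MuDense.exists_scalarVar_symmDiff_lt {B : ℕ → Set T} (hB : MuDense μ B) (hx' : ‖x'‖ ≤ 1)
    {s : Set T} (hs : MeasurableSet s) {δ : ℝ≥0∞} (hδ : δ ≠ 0) :
    ∃ k, scalarVar μ x' (s ∆ B k) < δ := by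
  obtain ⟨r, -, hr, hrδ⟩ := ENNReal.lt_iff_exists_real_btwn.mp (pos_iff_ne_zero.mpr hδ)
  obtain ⟨k, hk⟩ := hB.2 s hs r (ENNReal.ofReal_pos.mp hr)
  exact ⟨k, ((scalarVar_le_semivar hx' _).trans hk).trans_lt hrδ⟩

lemma apply_eq_zero_of_scalarVar_eq_zero {s : Set T} (h : scalarVar μ x' s = 0) :
    x' (μ s) = 0 :=
  (scalarMeas μ x').null_of_totalVariation_zero h

end VectorMeasure

theorem stmt_15_general (μ : VectorMeasure T X) (B : ℕ → Set T) (hB : MuDense μ B)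
    (η ω : ℕ → ℝ) (hη : ∀ k, 0 < η k)
    (hω : ∀ h, 0 < ω h)
    (x'h : ℕ → X →L[ℝ] ℝ) (hx'h : ∀ h, ‖x'h h‖ ≤ 1)
    (hdense : ∀ y : X →L[ℝ] ℝ, ‖y‖ ≤ 1 → ∀ ε : ℝ, 0 < ε → ∃ h, ‖x'h h - y‖ ≤ ε)
    (p : ℝ) (hp : 1 ≤ p) (f : T → ℝ) (hf : KLIntegrable μ f)
    (h0 : (∑' h, ENNReal.ofReal (ω h) *
      ∑' k, ENNReal.ofReal (η k * |∫ t, (B k).indicator f t ∂scalarVar μ (x'h h)| ^ p))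
        ^ (1 / p) = 0) :
    ∀ A : Set T, MeasurableSet A → A ⊆ {t | f t ≠ 0} → μ A = 0 := by
  intro A _ hAf
  have hBf : ∀ h k, ∫ t in B k, f t ∂scalarVar μ (x'h h) = 0 := fun h k => by
    rw [← integral_indicator (hB.1 k)]
    exact eq_zero_of_weighted_tsum_rpow_eq_zero hω hη (by linarith) h0 h k
  have hnull : ∀ h, scalarVar μ (x'h h) A = 0 := fun h =>
    measure_mono_null hAf <| ae_iff.mp <|
      (hf.1 (x'h h)).ae_eq_zero_of_forall_measure_symmDiff_lt hB.1 (hBf h)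
        fun _ hs _ hδ => hB.exists_scalarVar_symmDiff_lt (hx'h h) hs hδ
  exact eq_zero_of_forall_dense_dual_apply_eq_zero hdense fun h =>
    apply_eq_zero_of_scalarVar_eq_zero (hnull h)

/-- if `X'` is separable (witnessed by `(x'h)` dense in the unit ball of `X'`)
and the weak-topology norm `‖f‖_{KS^p[wτμ]}` of `f ∈ L¹[μ]` vanishes for some `1 ≤ p < ∞`,
then `f = 0` `μ`-almost everywhere; hence `‖·‖_{KS^p[wτμ]}` is a norm on `L¹[μ]`. -/
theorem stmt_15 (μ : VectorMeasure T X) (B : ℕ → Set T) (hB : MuDense μ B)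
    (η ω : ℕ → ℝ) (hη : ∀ k, 0 < η k) (hηsum : ∑' k, η k = 1)
    (hω : ∀ h, 0 < ω h) (hωsum : ∑' h, ω h = 1)
    (x'h : ℕ → X →L[ℝ] ℝ) (hx'h : ∀ h, ‖x'h h‖ ≤ 1)
    (hdense : ∀ y : X →L[ℝ] ℝ, ‖y‖ ≤ 1 → ∀ ε : ℝ, 0 < ε → ∃ h, ‖x'h h - y‖ ≤ ε)
    (p : ℝ) (hp : 1 ≤ p) (f : T → ℝ) (hmeas : Measurable f) (hf : KLIntegrable μ f)
    (h0 : (∑' h, ENNReal.ofReal (ω h) *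
      ∑' k, ENNReal.ofReal (η k * |∫ t, (B k).indicator f t ∂scalarVar μ (x'h h)| ^ p))
        ^ (1 / p) = 0) :
    ∀ A : Set T, MeasurableSet A → A ⊆ {t | f t ≠ 0} → μ A = 0 :=
  stmt_15_general μ B hB η ω hη hω x'h hx'h hdense p hp f hf h0
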